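/- Consider the lower-level Markov game G1 defined in the context, and the auxiliary game G2 in which each player i chooses a map xᵢ assigning to each pair (t, e) with e ∈ E_t a demand xᵢ(t, e) ∈ Dᵢ, and, for an initial public state e¹ ∈ E₁, receives value V̂ᵢ(x; e¹) = Σ_{t=1}^{T} Σ_{e ∈ E_t} μ_t(e)·gᵢ(e, x(t, e)), where μ₁ is the point mass at e¹, μ_{t+1} = μ_t·Q_t, and gᵢ(e, d) = θᵢ·dᵢ − (α·(Σⱼ dⱼ)/(n·e + γ₁) + β/(e + γ₂))·dᵢ. Suppose x* is a pure Nash equilibrium of G2 simultaneously for every initial state e¹ ∈ E₁ (for all i, all xᵢ, and all e¹, V̂ᵢ(x*; e¹) ≥ V̂ᵢ((xᵢ, x*₋ᵢ); e¹)). Then the pure private Markovian strategy profile π* defined by π*ᵢ(t, e, bᵢ) = (x*ᵢ(t, e), x*ᵢ(t, e) + bᵢ) is a pure private Markovian equilibrium of G1: for every player i, every (behavioral) private Markovian strategy πᵢ of player i, and every initial state s¹ ∈ E₁ × Π_j B_j, V^{π*}_{1,i}(s¹) ≥ V^{(πᵢ, π*₋ᵢ)}_{1,i}(s¹). -/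
import Mathlib


open scoped Classical

/-- Feasibility of an action `a = (d, c)` of a player with bounds `dmax, bmax, cmax`
at storage level `b`: `d ≤ dmax`, `c ≤ cmax` and `b + d − bmax ≤ c ≤ b + d`. -/
def feasibleAct (dmax bmax cmax : ℕ) (b : ℕ) (a : ℕ × ℕ) : Prop :=
  a.1 ≤ dmax ∧ a.2 ≤ cmax ∧ b + a.1 - bmax ≤ a.2 ∧ a.2 ≤ b + a.1

/-- The box `{0, …, dmax} × {0, …, cmax}` of demand–consumption pairs. -/
def actionBox (dmax cmax : ℕ) : Finset (ℕ × ℕ) :=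
  Finset.range (dmax + 1) ×ˢ Finset.range (cmax + 1)

/-- Stage payoff of player `i` in the Markov game `G1`:
`r_i(s, a) = θ_i c_i − (α (Σ_j d_j)/(n e + γ₁) + β/(e + γ₂)) d_i`. -/
noncomputable def stageRewardG1 (n : ℕ) (α β γ₁ γ₂ : ℝ) (θ : Fin n → ℝ)
    (i : Fin n) (e : ℝ) (a : Fin n → ℕ × ℕ) : ℝ :=
  θ i * ((a i).2 : ℝ)
    - (α * (∑ j, ((a j).1 : ℝ)) / (n * e + γ₁) + β / (e + γ₂)) * ((a i).1 : ℝ)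

/-- The value function of player `i` in `G1` under a behavioral private Markovian
strategy profile `π`, defined by backward recursion on the number of remaining stages
(first argument): `value π i k t e b` is the expected total payoff of `i` over stages
`t, t+1, …, t+k−1` starting at state `(e, b)`; storage evolves by `b' = b + d − c`,
and the public state moves by the action-independent kernel `Q`. -/
noncomputable def valueG1 (n : ℕ) (α β γ₁ γ₂ : ℝ) (θ : Fin n → ℝ)
    (E : ℕ → Finset ℝ) (Q : ℕ → ℝ → ℝ → ℝ) (dmax cmax : Fin n → ℕ)
    (π : Fin n → ℕ → ℝ → ℕ → ℕ × ℕ → ℝ) (i : Fin n) :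
    ℕ → ℕ → ℝ → (Fin n → ℕ) → ℝ
  | 0, _, _, _ => 0
  | k + 1, t, e, b =>
      ∑ a ∈ Fintype.piFinset (fun j => actionBox (dmax j) (cmax j)),
        (∏ j, π j t e (b j) (a j)) *
          (stageRewardG1 n α β γ₁ γ₂ θ i e a
            + ∑ e' ∈ E (t + 1),
                Q t e e' *
                  valueG1 n α β γ₁ γ₂ θ E Q dmax cmax π i k (t + 1) e'
                    (fun j => b j + (a j).1 - (a j).2))

/-- `πi` is a (behavioral) private Markovian strategy of player `i`: at every time
`t ∈ {1, …, T}`, public state `e ∈ E t` and private storage `b ≤ bmax i`, it is a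
probability distribution supported on the feasible actions. -/
def IsPMS (T n : ℕ) (E : ℕ → Finset ℝ) (dmax bmax cmax : Fin n → ℕ) (i : Fin n)
    (πi : ℕ → ℝ → ℕ → ℕ × ℕ → ℝ) : Prop :=
  ∀ t, 1 ≤ t → t ≤ T → ∀ e ∈ E t, ∀ b : ℕ, b ≤ bmax i →
    (∀ a, 0 ≤ πi t e b a) ∧
    (∀ a, ¬ feasibleAct (dmax i) (bmax i) (cmax i) b a → πi t e b a = 0) ∧
    (∑ a ∈ (actionBox (dmax i) (cmax i)).filter
        (fun a => feasibleAct (dmax i) (bmax i) (cmax i) b a), πi t e b a) = 1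

/-- The pure private Markovian strategy induced by a demand rule `x : time → public
state → demand`: play `(x t e, x t e + b)`, i.e. consume demand plus current storage. -/
noncomputable def purePMS (x : ℕ → ℝ → ℕ) : ℕ → ℝ → ℕ → ℕ × ℕ → ℝ :=
  fun t e b a => if a = (x t e, x t e + b) then 1 else 0

/-- Stage payoff of the auxiliary demand game `G2` (demands are natural numbers in
`{0, …, dmaxᵢ}`): `g_i(e, d) = θ_i d_i − (α (Σ_j d_j)/(n e + γ₁) + β/(e + γ₂)) d_i`. -/
noncomputable def g2PayoffNat (n : ℕ) (α β γ₁ γ₂ : ℝ) (θ : Fin n → ℝ)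
    (i : Fin n) (e : ℝ) (d : Fin n → ℕ) : ℝ :=
  θ i * (d i : ℝ)
    - (α * (∑ j, ((d j) : ℝ)) / (n * e + γ₁) + β / (e + γ₂)) * (d i : ℝ)

/-- The state distribution of the action-independent public chain: `μ 1` is the point
mass at `e1`, and `μ (t+1) = μ t · Q t`. -/
noncomputable def pubDist (E : ℕ → Finset ℝ) (Q : ℕ → ℝ → ℝ → ℝ) (e1 : ℝ) :
    ℕ → ℝ → ℝ
  | 0, _ => 0
  | 1, e => if e = e1 then 1 else 0
  | t + 2, e' => ∑ e ∈ E (t + 1), pubDist E Q e1 (t + 1) e * Q (t + 1) e e'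

/-- Value of player `i` in the auxiliary game `G2` from initial public state `e1`:
`V̂ᵢ(x; e¹) = Σ_{t=1}^{T} Σ_{e ∈ E_t} μ_t(e) · gᵢ(e, x(t, e))`. -/
noncomputable def g2Value (T n : ℕ) (α β γ₁ γ₂ : ℝ) (θ : Fin n → ℝ)
    (E : ℕ → Finset ℝ) (Q : ℕ → ℝ → ℝ → ℝ) (i : Fin n)
    (x : Fin n → ℕ → ℝ → ℕ) (e1 : ℝ) : ℝ :=
  ∑ t ∈ Finset.Icc 1 T, ∑ e ∈ E t,
    pubDist E Q e1 t e * g2PayoffNat n α β γ₁ γ₂ θ i e (fun j => x j t e)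

theorem collapse_dev {n : ℕ} (boxes : Fin n → Finset (ℕ × ℕ)) (i : Fin n)
    (ah : Fin n → ℕ × ℕ) (hah : ∀ j, ah j ∈ boxes j)
    (w : ℕ × ℕ → ℝ) (Φ : (Fin n → ℕ × ℕ) → ℝ) :
    ∑ a ∈ Fintype.piFinset boxes,
        (∏ j, if j = i then w (a j) else if a j = ah j then (1:ℝ) else 0) * Φ a
      = ∑ ai ∈ boxes i, w ai * Φ (Function.update ah i ai) := by
  rw [← Finset.sum_filter_of_ne (p := fun a => ∀ j, j ≠ i → a j = ah j)
    (fun a _ hne j hj => by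
      by_contra hja
      exact hne (by rw [Finset.prod_eq_zero (Finset.mem_univ j) (by simp [hj, hja]), zero_mul]))]
  refine Finset.sum_nbij' (fun a => a i) (fun ai => Function.update ah i ai) ?_ ?_ ?_ ?_ ?_
  · intro a ha
    simp only [Finset.mem_filter, Fintype.mem_piFinset] at ha
    exact ha.1 i
  · intro ai hai
    simp only [Finset.mem_filter, Fintype.mem_piFinset]
    constructor
    · intro j
      by_cases h : j = i
      · subst h; simpa using hai
      · simpa [Function.update_of_ne h] using hah j
    · intro j hj; simp [Function.update_of_ne hj]
  · intro a ha
    simp only [Finset.mem_filter] at ha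
    funext j
    by_cases h : j = i
    · subst h; simp
    · simp [Function.update_of_ne h, ha.2 j h]
  · intro ai _; simp
  · intro a ha
    simp only [Finset.mem_filter] at ha
    have hprod : (∏ j, if j = i then w (a j) else if a j = ah j then (1:ℝ) else 0) = w (a i) := by
      rw [Fintype.prod_eq_single i (fun j hj => by simp [hj, ha.2 j hj])]
      simp
    have hupd : Function.update ah i (a i) = a := by
      funext j
      by_cases h : j = i
      · subst h; simp
      · simp [Function.update_of_ne h, ha.2 j h]
    rw [hprod, hupd]

theorem collapse_pure {n : ℕ} (boxes : Fin n → Finset (ℕ × ℕ))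
    (ah : Fin n → ℕ × ℕ) (hah : ∀ j, ah j ∈ boxes j) (Φ : (Fin n → ℕ × ℕ) → ℝ) :
    ∑ a ∈ Fintype.piFinset boxes, (∏ j, if a j = ah j then (1:ℝ) else 0) * Φ a = Φ ah := by
  rw [Finset.sum_eq_single_of_mem ah (by simpa [Fintype.mem_piFinset] using hah)
    (fun a _ hne => ?_)]
  · simp
  · obtain ⟨j, hj⟩ : ∃ j, a j ≠ ah j := by
      by_contra h; push_neg at h; exact hne (funext h)
    rw [Finset.prod_eq_zero (Finset.mem_univ j) (by simp [hj]), zero_mul]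
/-- Accumulated payoff recursion along the public chain. -/
noncomputable def accQ (E : ℕ → Finset ℝ) (Q : ℕ → ℝ → ℝ → ℝ) (h : ℕ → ℝ → ℝ) :
    ℕ → ℕ → ℝ → ℝ
  | 0, _, _ => 0
  | k + 1, t, e => h t e + ∑ e' ∈ E (t + 1), Q t e e' * accQ E Q h k (t + 1) e'

theorem accQ_sum (E : ℕ → Finset ℝ) (Q : ℕ → ℝ → ℝ → ℝ) (h : ℕ → ℝ → ℝ) (e1 : ℝ) :
    ∀ (k t : ℕ), 1 ≤ t →
      (∑ e ∈ E t, pubDist E Q e1 t e * accQ E Q h k t e)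
        = ∑ s ∈ Finset.Ico t (t + k), ∑ e ∈ E s, pubDist E Q e1 s e * h s e := by
  intro k
  induction k with
  | zero => intro t _; simp [accQ]
  | succ k ih =>
    intro t ht
    obtain ⟨m, rfl⟩ : ∃ m, t = m + 1 := ⟨t - 1, by omega⟩
    have key : (∑ e ∈ E (m+1), pubDist E Q e1 (m+1) e * accQ E Q h (k+1) (m+1) e)
        = (∑ e ∈ E (m+1), pubDist E Q e1 (m+1) e * h (m+1) e)
          + ∑ e' ∈ E (m+2), pubDist E Q e1 (m+2) e' * accQ E Q h k (m+2) e' := by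
      simp only [accQ, mul_add, Finset.sum_add_distrib, Finset.mul_sum]
      congr 1
      rw [Finset.sum_comm]
      refine Finset.sum_congr rfl fun e' _ => ?_
      rw [show pubDist E Q e1 (m+2) e' = ∑ e ∈ E (m+1), pubDist E Q e1 (m+1) e * Q (m+1) e e'
        from rfl, Finset.sum_mul]
      exact Finset.sum_congr rfl fun e _ => by ring
    rw [key, ih (m+2) (by omega), show m + 1 + (k+1) = m + 2 + k from by omega,
      Finset.sum_eq_sum_Ico_succ_bot (by omega : m + 1 < m + 2 + k)]

theorem g2Value_eq_accQ (T n : ℕ) (α β γ₁ γ₂ : ℝ) (θ : Fin n → ℝ)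
    (E : ℕ → Finset ℝ) (Q : ℕ → ℝ → ℝ → ℝ) (i : Fin n) (x : Fin n → ℕ → ℝ → ℕ)
    (e1 : ℝ) (he1 : e1 ∈ E 1) :
    g2Value T n α β γ₁ γ₂ θ E Q i x e1
      = accQ E Q (fun t e => g2PayoffNat n α β γ₁ γ₂ θ i e (fun j => x j t e)) T 1 e1 := by
  have h := accQ_sum E Q (fun t e => g2PayoffNat n α β γ₁ γ₂ θ i e (fun j => x j t e)) e1 T 1
    le_rfl
  have hpt : (∑ e ∈ E 1, pubDist E Q e1 1 e *
      accQ E Q (fun t e => g2PayoffNat n α β γ₁ γ₂ θ i e (fun j => x j t e)) T 1 e)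
      = accQ E Q (fun t e => g2PayoffNat n α β γ₁ γ₂ θ i e (fun j => x j t e)) T 1 e1 := by
    have : ∀ e ∈ E 1, pubDist E Q e1 1 e *
        accQ E Q (fun t e => g2PayoffNat n α β γ₁ γ₂ θ i e (fun j => x j t e)) T 1 e
        = if e = e1 then
            accQ E Q (fun t e => g2PayoffNat n α β γ₁ γ₂ θ i e (fun j => x j t e)) T 1 e
          else 0 := by
      intro e _
      rw [show pubDist E Q e1 1 e = if e = e1 then 1 else 0 from rfl]
      split <;> simp
    rw [Finset.sum_congr rfl this, Finset.sum_ite_eq' (E 1) e1, if_pos he1]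
  rw [← hpt, h, g2Value]
  rw [show (1 : ℕ) + T = T + 1 from by omega, Finset.Ico_add_one_right_eq_Icc]

/-- Equilibrium transfer (proof of Theorem 2): if `xs` is a pure Nash equilibrium of the
auxiliary game `G2` simultaneously for every initial public state `e¹ ∈ E₁`, then the
pure private Markovian strategy profile `π*_i(t, e, b_i) = (xs_i(t, e), xs_i(t, e) + b_i)`
is a pure private Markovian equilibrium of `G1`. -/
theorem stmt_16 (T n : ℕ) (hT : 1 ≤ T) (hn : 1 ≤ n)
    (α β γ₁ γ₂ : ℝ) (hα : 0 < α) (hβ : 0 < β) (hγ₁ : 0 < γ₁) (hγ₂ : 0 < γ₂)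
    (θ : Fin n → ℝ) (hθ : ∀ i, 0 < θ i)
    (E : ℕ → Finset ℝ)
    (hEne : ∀ t, 1 ≤ t → t ≤ T → (E t).Nonempty)
    (hEpos : ∀ t, 1 ≤ t → t ≤ T → ∀ e ∈ E t, (0:ℝ) < e)
    (Q : ℕ → ℝ → ℝ → ℝ)
    (hQnn : ∀ t, 1 ≤ t → t < T → ∀ e ∈ E t, ∀ e' ∈ E (t + 1), 0 ≤ Q t e e')
    (hQrow : ∀ t, 1 ≤ t → t < T → ∀ e ∈ E t, (∑ e' ∈ E (t + 1), Q t e e') = 1)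
    (dmax bmax cmax : Fin n → ℕ) (hcmax : ∀ i, dmax i + bmax i ≤ cmax i)
    (xs : Fin n → ℕ → ℝ → ℕ) (hxs : ∀ i t e, xs i t e ≤ dmax i)
    (hNE : ∀ (i : Fin n) (xi : ℕ → ℝ → ℕ), (∀ t e, xi t e ≤ dmax i) →
      ∀ e1 ∈ E 1,
        g2Value T n α β γ₁ γ₂ θ E Q i (Function.update xs i xi) e1
          ≤ g2Value T n α β γ₁ γ₂ θ E Q i xs e1) :
    ∀ (i : Fin n) (πi : ℕ → ℝ → ℕ → ℕ × ℕ → ℝ),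
      IsPMS T n E dmax bmax cmax i πi →
      ∀ e1 ∈ E 1, ∀ b1 : Fin n → ℕ, (∀ j, b1 j ≤ bmax j) →
        valueG1 n α β γ₁ γ₂ θ E Q dmax cmax
            (Function.update (fun j => purePMS (xs j)) i πi) i T 1 e1 b1
          ≤ valueG1 n α β γ₁ γ₂ θ E Q dmax cmax (fun j => purePMS (xs j)) i T 1 e1 b1 := by
  intro i πi hPMS e1 he1 b1 hb1
  -- best pointwise deviation demand
  have hex : ∀ (t : ℕ) (e : ℝ), ∃ d, d ≤ dmax i ∧ ∀ d', d' ≤ dmax i →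
      g2PayoffNat n α β γ₁ γ₂ θ i e (Function.update (fun j => xs j t e) i d')
        ≤ g2PayoffNat n α β γ₁ γ₂ θ i e (Function.update (fun j => xs j t e) i d) := by
    intro t e
    obtain ⟨d, hd, hmax⟩ := Finset.exists_max_image (Finset.range (dmax i + 1))
      (fun d => g2PayoffNat n α β γ₁ γ₂ θ i e (Function.update (fun j => xs j t e) i d))
      ⟨0, Finset.mem_range.2 (by omega)⟩
    exact ⟨d, Finset.mem_range_succ_iff.1 hd,
      fun d' hd' => hmax d' (Finset.mem_range_succ_iff.2 hd')⟩
  choose xb hxb1 hxb2 using hex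
  -- the pointwise-max payoff and the equilibrium payoff
  set hstar : ℕ → ℝ → ℝ := fun t e =>
    g2PayoffNat n α β γ₁ γ₂ θ i e (Function.update (fun j => xs j t e) i (xb t e)) with hhstar
  set gg : ℕ → ℝ → ℝ := fun t e =>
    g2PayoffNat n α β γ₁ γ₂ θ i e (fun j => xs j t e) with hgg
  -- Lemma B : value under the pure equilibrium profile
  have lemB : ∀ (k t : ℕ) (e : ℝ) (b : Fin n → ℕ), (∀ j, b j ≤ bmax j) →
      valueG1 n α β γ₁ γ₂ θ E Q dmax cmax (fun j => purePMS (xs j)) i k t e b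
        = (if k = 0 then 0 else θ i * (b i : ℝ)) + accQ E Q gg k t e := by
    intro k
    induction k with
    | zero => intro t e b _; simp [valueG1, accQ]
    | succ k ih =>
      intro t e b hb
      have hah : ∀ j, ((xs j t e, xs j t e + b j) : ℕ × ℕ) ∈ actionBox (dmax j) (cmax j) := by
        intro j
        simp only [actionBox, Finset.mem_product, Finset.mem_range, Nat.lt_succ_iff]
        exact ⟨hxs j t e, le_trans (add_le_add (hxs j t e) (hb j)) (hcmax j)⟩
      have hmatch : ∀ a : Fin n → ℕ × ℕ,
          (∏ j, purePMS (xs j) t e (b j) (a j))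
            = ∏ j, if a j = ((xs j t e, xs j t e + b j) : ℕ × ℕ) then (1:ℝ) else 0 :=
        fun a => Finset.prod_congr rfl fun j _ => by simp [purePMS]
      rw [valueG1]
      rw [Finset.sum_congr rfl fun a _ => by rw [hmatch a]]
      rw [collapse_pure (fun j => actionBox (dmax j) (cmax j))
        (fun j => ((xs j t e, xs j t e + b j) : ℕ × ℕ)) hah
        (fun a => stageRewardG1 n α β γ₁ γ₂ θ i e a
          + ∑ e' ∈ E (t + 1), Q t e e' *
              valueG1 n α β γ₁ γ₂ θ E Q dmax cmax (fun j => purePMS (xs j)) i k (t + 1) e'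
                (fun j => b j + (a j).1 - (a j).2))]
      have hb0 : (fun j => b j + ((xs j t e, xs j t e + b j) : ℕ × ℕ).1
          - ((xs j t e, xs j t e + b j) : ℕ × ℕ).2) = fun _ : Fin n => (0:ℕ) := by
        funext j; simp only; omega
      rw [hb0]
      have hih : ∀ e', valueG1 n α β γ₁ γ₂ θ E Q dmax cmax (fun j => purePMS (xs j)) i
          k (t+1) e' (fun _ => 0) = accQ E Q gg k (t+1) e' := by
        intro e'
        rw [ih (t+1) e' (fun _ => 0) (fun j => Nat.zero_le _)]
        split <;> simp
      rw [Finset.sum_congr rfl fun e' _ => by rw [hih e']]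
      have hrw : stageRewardG1 n α β γ₁ γ₂ θ i e
          (fun j => ((xs j t e, xs j t e + b j) : ℕ × ℕ))
          = θ i * (b i : ℝ) + gg t e := by
        simp only [stageRewardG1, hgg, g2PayoffNat]
        push_cast
        ring
      rw [hrw, if_neg (by omega)]
      rw [show accQ E Q gg (k+1) t e
        = gg t e + ∑ e' ∈ E (t + 1), Q t e e' * accQ E Q gg k (t + 1) e' from rfl]
      ring
  -- Lemma A : value under deviation is bounded by pointwise-max accumulated payoff
  have lemA : ∀ (k t : ℕ), 1 ≤ t → t + k ≤ T + 1 → ∀ e ∈ E t, ∀ b : Fin n → ℕ,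
      (∀ j, b j ≤ bmax j) →
      valueG1 n α β γ₁ γ₂ θ E Q dmax cmax
          (Function.update (fun j => purePMS (xs j)) i πi) i k t e b
        ≤ θ i * (b i : ℝ) + accQ E Q hstar k t e := by
    intro k
    induction k with
    | zero =>
      intro t _ _ e _ b _
      simp only [valueG1, accQ]
      have : (0:ℝ) ≤ θ i * (b i : ℝ) := mul_nonneg (hθ i).le (Nat.cast_nonneg _)
      linarith
    | succ k ih =>
      intro t ht htk e he b hb
      obtain ⟨hpos, hsupp, hsum1⟩ := hPMS t ht (by omega) e he (b i) (hb i)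
      have hah : ∀ j, ((xs j t e, xs j t e + b j) : ℕ × ℕ) ∈ actionBox (dmax j) (cmax j) := by
        intro j
        simp only [actionBox, Finset.mem_product, Finset.mem_range, Nat.lt_succ_iff]
        exact ⟨hxs j t e, le_trans (add_le_add (hxs j t e) (hb j)) (hcmax j)⟩
      have hmatch : ∀ a : Fin n → ℕ × ℕ,
          (∏ j, (Function.update (fun j => purePMS (xs j)) i πi) j t e (b j) (a j))
            = ∏ j, if j = i then πi t e (b i) (a j)
                else if a j = ((xs j t e, xs j t e + b j) : ℕ × ℕ) then (1:ℝ) else 0 :=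
        fun a => Finset.prod_congr rfl fun j _ => by
          by_cases h : j = i
          · subst h; simp
          · simp [Function.update_of_ne h, purePMS, h]
      rw [valueG1]
      rw [Finset.sum_congr rfl fun a _ => by rw [hmatch a]]
      rw [collapse_dev (fun j => actionBox (dmax j) (cmax j)) i
        (fun j => ((xs j t e, xs j t e + b j) : ℕ × ℕ)) hah (πi t e (b i))
        (fun a => stageRewardG1 n α β γ₁ γ₂ θ i e a
          + ∑ e' ∈ E (t + 1), Q t e e' *
              valueG1 n α β γ₁ γ₂ θ E Q dmax cmax
                (Function.update (fun j => purePMS (xs j)) i πi) i k (t + 1) e'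
                (fun j => b j + (a j).1 - (a j).2))]
      -- key pointwise bound for feasible actions
      have keyb : ∀ ai, feasibleAct (dmax i) (bmax i) (cmax i) (b i) ai →
          stageRewardG1 n α β γ₁ γ₂ θ i e
              (Function.update (fun j => ((xs j t e, xs j t e + b j) : ℕ × ℕ)) i ai)
            + ∑ e' ∈ E (t + 1), Q t e e' *
                valueG1 n α β γ₁ γ₂ θ E Q dmax cmax
                  (Function.update (fun j => purePMS (xs j)) i πi) i k (t + 1) e'
                  (fun j => b j
                    + ((Function.update (fun j => ((xs j t e, xs j t e + b j) : ℕ × ℕ)) i ai) j).1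
                    - ((Function.update (fun j => ((xs j t e, xs j t e + b j) : ℕ × ℕ)) i ai) j).2)
            ≤ θ i * (b i : ℝ) + accQ E Q hstar (k+1) t e := by
        intro ai hfeas
        obtain ⟨hfd, hfc, hflo, hfhi⟩ := hfeas
        set bnext : Fin n → ℕ := fun j => b j
          + ((Function.update (fun j => ((xs j t e, xs j t e + b j) : ℕ × ℕ)) i ai) j).1
          - ((Function.update (fun j => ((xs j t e, xs j t e + b j) : ℕ × ℕ)) i ai) j).2
          with hbnext
        have hbn_i : bnext i = b i + ai.1 - ai.2 := by simp [hbnext]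
        have hbn_le : ∀ j, bnext j ≤ bmax j := by
          intro j
          by_cases h : j = i
          · subst h; rw [hbn_i]; omega
          · simp only [hbnext, Function.update_of_ne h]; omega
        have S : (∑ e' ∈ E (t + 1), Q t e e' *
              valueG1 n α β γ₁ γ₂ θ E Q dmax cmax
                (Function.update (fun j => purePMS (xs j)) i πi) i k (t + 1) e' bnext)
            ≤ θ i * (bnext i : ℝ) + ∑ e' ∈ E (t + 1), Q t e e' * accQ E Q hstar k (t + 1) e' := by
          cases k with
          | zero =>
            simp only [valueG1, accQ, mul_zero, Finset.sum_const_zero]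
            have : (0:ℝ) ≤ θ i * (bnext i : ℝ) := mul_nonneg (hθ i).le (Nat.cast_nonneg _)
            linarith
          | succ m =>
            have htT : t < T := by omega
            calc (∑ e' ∈ E (t + 1), Q t e e' *
                  valueG1 n α β γ₁ γ₂ θ E Q dmax cmax
                    (Function.update (fun j => purePMS (xs j)) i πi) i (m+1) (t + 1) e' bnext)
                ≤ ∑ e' ∈ E (t + 1), Q t e e' *
                    (θ i * (bnext i : ℝ) + accQ E Q hstar (m+1) (t + 1) e') :=
                  Finset.sum_le_sum fun e' he' => mul_le_mul_of_nonneg_left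
                    (ih (t+1) (by omega) (by omega) e' he' bnext hbn_le)
                    (hQnn t ht htT e he e' he')
              _ = θ i * (bnext i : ℝ)
                    + ∑ e' ∈ E (t + 1), Q t e e' * accQ E Q hstar (m+1) (t + 1) e' := by
                  simp only [mul_add, Finset.sum_add_distrib]
                  congr 1
                  rw [← Finset.sum_mul, hQrow t ht htT e he, one_mul]
        have hreward : stageRewardG1 n α β γ₁ γ₂ θ i e
              (Function.update (fun j => ((xs j t e, xs j t e + b j) : ℕ × ℕ)) i ai)
              + θ i * (bnext i : ℝ)
            = θ i * (b i : ℝ)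
              + g2PayoffNat n α β γ₁ γ₂ θ i e (Function.update (fun j => xs j t e) i ai.1) := by
          have hcast : ((bnext i : ℕ) : ℝ) = (b i : ℝ) + (ai.1 : ℝ) - (ai.2 : ℝ) := by
            rw [hbn_i, Nat.cast_sub (by omega), Nat.cast_add]
          have hsume : (∑ j, (((Function.update
                (fun j => ((xs j t e, xs j t e + b j) : ℕ × ℕ)) i ai) j).1 : ℝ))
              = ∑ j, ((Function.update (fun j => xs j t e) i ai.1 j : ℕ) : ℝ) :=
            Finset.sum_congr rfl fun j _ => by
              by_cases h : j = i
              · subst h; simp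
              · simp [Function.update_of_ne h]
          simp only [stageRewardG1, g2PayoffNat]
          rw [hsume, hcast]
          simp only [Function.update_self]
          ring
        have hgle : g2PayoffNat n α β γ₁ γ₂ θ i e (Function.update (fun j => xs j t e) i ai.1)
            ≤ hstar t e := hxb2 t e ai.1 hfd
        have haccQ : accQ E Q hstar (k+1) t e
            = hstar t e + ∑ e' ∈ E (t + 1), Q t e e' * accQ E Q hstar k (t + 1) e' := rfl
        linarith
      calc (∑ ai ∈ actionBox (dmax i) (cmax i), πi t e (b i) ai *
            (stageRewardG1 n α β γ₁ γ₂ θ i e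
              (Function.update (fun j => ((xs j t e, xs j t e + b j) : ℕ × ℕ)) i ai)
            + ∑ e' ∈ E (t + 1), Q t e e' *
                valueG1 n α β γ₁ γ₂ θ E Q dmax cmax
                  (Function.update (fun j => purePMS (xs j)) i πi) i k (t + 1) e'
                  (fun j => b j
                    + ((Function.update (fun j => ((xs j t e, xs j t e + b j) : ℕ × ℕ)) i ai) j).1
                    - ((Function.update (fun j => ((xs j t e, xs j t e + b j) : ℕ × ℕ)) i ai) j).2)))
          = ∑ ai ∈ (actionBox (dmax i) (cmax i)).filter
              (fun a => feasibleAct (dmax i) (bmax i) (cmax i) (b i) a), πi t e (b i) ai *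
            (stageRewardG1 n α β γ₁ γ₂ θ i e
              (Function.update (fun j => ((xs j t e, xs j t e + b j) : ℕ × ℕ)) i ai)
            + ∑ e' ∈ E (t + 1), Q t e e' *
                valueG1 n α β γ₁ γ₂ θ E Q dmax cmax
                  (Function.update (fun j => purePMS (xs j)) i πi) i k (t + 1) e'
                  (fun j => b j
                    + ((Function.update (fun j => ((xs j t e, xs j t e + b j) : ℕ × ℕ)) i ai) j).1
                    - ((Function.update (fun j => ((xs j t e, xs j t e + b j) : ℕ × ℕ)) i ai) j).2)) := by
            refine (Finset.sum_subset (Finset.filter_subset _ _) fun ai hai hnai => ?_).symm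
            have : ¬ feasibleAct (dmax i) (bmax i) (cmax i) (b i) ai := by
              simpa [Finset.mem_filter, hai] using hnai
            rw [hsupp ai this, zero_mul]
        _ ≤ ∑ ai ∈ (actionBox (dmax i) (cmax i)).filter
              (fun a => feasibleAct (dmax i) (bmax i) (cmax i) (b i) a), πi t e (b i) ai *
              (θ i * (b i : ℝ) + accQ E Q hstar (k+1) t e) := by
            refine Finset.sum_le_sum fun ai hai => ?_
            have hfeas := (Finset.mem_filter.1 hai).2
            exact mul_le_mul_of_nonneg_left (keyb ai hfeas) (hpos ai)
        _ = θ i * (b i : ℝ) + accQ E Q hstar (k+1) t e := by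
            rw [← Finset.sum_mul, hsum1, one_mul]
  -- assemble
  have hA := lemA T 1 le_rfl (by omega) e1 he1 b1 hb1
  have hB := lemB T 1 e1 b1 hb1
  have h1 : accQ E Q hstar T 1 e1
      = g2Value T n α β γ₁ γ₂ θ E Q i (Function.update xs i xb) e1 := by
    rw [g2Value_eq_accQ T n α β γ₁ γ₂ θ E Q i (Function.update xs i xb) e1 he1]
    congr 1
    funext t e
    show g2PayoffNat n α β γ₁ γ₂ θ i e (Function.update (fun j => xs j t e) i (xb t e))
      = g2PayoffNat n α β γ₁ γ₂ θ i e (fun j => Function.update xs i xb j t e)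
    congr 1
    funext j
    by_cases h : j = i
    · subst h; simp
    · simp [Function.update_of_ne h]
  have h2 : accQ E Q gg T 1 e1 = g2Value T n α β γ₁ γ₂ θ E Q i xs e1 := by
    rw [g2Value_eq_accQ T n α β γ₁ γ₂ θ E Q i xs e1 he1]
  have hNE' := hNE i xb hxb1 e1 he1
  rw [hB, if_neg (by omega)]
  have : accQ E Q hstar T 1 e1 ≤ accQ E Q gg T 1 e1 := by rw [h1, h2]; exact hNE'
  linarith
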